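/- Let n ≥ 3 be an integer, k ∈ ℕ and h₀, …, h_k ∈ ℝ⁴, and set h(s) := Σ_{m=0}^{k} s^n·(log s)^m·h_m. If (L_Ric h)(s) = 0 for all s > 0, then there exist ω₀, …, ω_k ∈ ℝ² and α ∈ ℝ such that, setting ω(s) := Σ_{m=0}^{k} s^n·(log s)^m·ω_m, one has h(s) + (L_{δ*} ω)(s) = s^n·(0,0,0,α) for all s > 0. -/

import Mathlib

/-! Writing `h = Σ_m s^n (log s)^m h_m`, the operator `s d/ds` acts on the coefficient sequence by
`h_m ↦ n h_m + (m+1) h_{m+1}`, and the functions `s^n (log s)^m` are linearly independent, so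
`L_Ric h = 0` becomes a system of recursions on the coefficients. Rows 0 and 2 combine to
`(n² − n) (h_{m,0} − (s∂_s h_{·,2})_m) = 0`, which is exactly what the first component of
`L_{δ*} ω` cancels when `ω_{·,0} = −h_{·,2}`. Row 3 says that `s∂_s (s∂_s − n)` kills the fourth
component, so for `n ≠ 0` it is constant in `log s`: this is `α`. Row 1 is empty, and the second
component is removed by solving `(n + 1 + ∂) ω_{·,1} = −2 h_{·,1}` with `∂ = d/d(log s)`, which
is possible because `n + 1 + ∂` is invertible on polynomials in `log s`. -/

open Matrix

/-- The indicial family `I(D Ric − Λ, λ)` (with `Λ = n`) of the linearized Einstein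
operator on asymptotically de Sitter space, in the scalar block decomposition. -/
noncomputable def M (n : ℕ) (lam : ℝ) : Matrix (Fin 4) (Fin 4) ℝ :=
  (1 / 2 : ℝ) • !![(n : ℝ) * (lam - 2), 0, -(n : ℝ) * lam * (lam - 2), 0;
                   0, 0, 0, 0;
                   2 * (n : ℝ) - lam, 0, lam * (lam - 2 * (n : ℝ)), 0;
                   0, 0, 0, lam * (lam - (n : ℝ))]

/-- `A₂`: the coefficient of `λ²` in `M(n,λ) = A₂λ² + A₁λ + A₀`. -/
noncomputable def A2 (n : ℕ) : Matrix (Fin 4) (Fin 4) ℝ :=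
  (1 / 2 : ℝ) • !![0, 0, -(n : ℝ), 0;
                   0, 0, 0, 0;
                   0, 0, 1, 0;
                   0, 0, 0, 1]

/-- `A₁`: the coefficient of `λ` in `M(n,λ) = A₂λ² + A₁λ + A₀`. -/
noncomputable def A1 (n : ℕ) : Matrix (Fin 4) (Fin 4) ℝ :=
  (1 / 2 : ℝ) • !![(n : ℝ), 0, 2 * (n : ℝ), 0;
                   0, 0, 0, 0;
                   -1, 0, -2 * (n : ℝ), 0;
                   0, 0, 0, -(n : ℝ)]

/-- `A₀`: the constant coefficient in `M(n,λ) = A₂λ² + A₁λ + A₀`. -/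
noncomputable def A0 (n : ℕ) : Matrix (Fin 4) (Fin 4) ℝ :=
  (1 / 2 : ℝ) • !![-2 * (n : ℝ), 0, 0, 0;
                   0, 0, 0, 0;
                   2 * (n : ℝ), 0, 0, 0;
                   0, 0, 0, 0]

/-- The operator `s d/ds` acting on `ℝ⁴`-valued functions of `s`. -/
noncomputable def sD (h : ℝ → (Fin 4 → ℝ)) : ℝ → (Fin 4 → ℝ) :=
  fun s => s • deriv h s

/-- The indicial (Euler) operator
`(L_Ric h)(s) = A₂ (s d/ds)² h(s) + A₁ (s d/ds) h(s) + A₀ h(s)`. -/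
noncomputable def LRic (n : ℕ) (h : ℝ → (Fin 4 → ℝ)) : ℝ → (Fin 4 → ℝ) :=
  fun s => (A2 n).mulVec (sD (sD h) s) + (A1 n).mulVec (sD h s) + (A0 n).mulVec (h s)

/-- The entrywise `j`-th derivative of `M(n,λ)` with respect to `λ`. -/
noncomputable def Mder (n : ℕ) (j : ℕ) (lam : ℝ) : Matrix (Fin 4) (Fin 4) ℝ :=
  Matrix.of fun i k => iteratedDeriv j (fun t : ℝ => M n t i k) lam

/-- `N₁`: the coefficient of `λ` in `D(λ) = N₁λ + N₀`, where `D(λ)` is the indicial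
family `I(δ*, λ)` of the symmetric gradient. -/
noncomputable def N1 : Matrix (Fin 4) (Fin 2) ℝ :=
  !![1, 0;
     0, 1 / 2;
     0, 0;
     0, 0]

/-- `N₀`: the constant coefficient in `D(λ) = N₁λ + N₀`. -/
noncomputable def N0 : Matrix (Fin 4) (Fin 2) ℝ :=
  !![0, 0;
     0, 1 / 2;
     1, 0;
     0, 0]

/-- The indicial (Euler) operator of the symmetric gradient,
`(L_{δ*} ω)(s) = N₁ (s ω′(s)) + N₀ ω(s)`. -/
noncomputable def LDel (ω : ℝ → (Fin 2 → ℝ)) : ℝ → (Fin 4 → ℝ) :=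
  fun s => N1.mulVec (s • deriv ω s) + N0.mulVec (ω s)

open Finset Filter

section Coefficients

variable {E : Type*} [AddCommGroup E] [Module ℝ E]

/-- Since `s d/ds (s^a (log s)^m) = a s^a (log s)^m + m s^a (log s)^(m-1)`, this is how `s d/ds`
acts on the coefficients `v m` of `Σ_m s^a (log s)^m v m`. -/
noncomputable def sDCoeff (a : ℝ) (v : ℕ → E) (m : ℕ) : E :=
  a • v m + ((m : ℝ) + 1) • v (m + 1)

theorem sDCoeff_add (a : ℝ) (v w : ℕ → E) : sDCoeff a (v + w) = sDCoeff a v + sDCoeff a w := by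
  funext m
  simp only [sDCoeff, Pi.add_apply, smul_add]
  abel

theorem sDCoeff_eq_zero_of_ge {a : ℝ} {K : ℕ} {v : ℕ → E} (hv : ∀ m ≥ K, v m = 0) :
    ∀ m ≥ K, sDCoeff a v m = 0 := fun m hm => by
  simp [sDCoeff, hv m hm, hv (m + 1) (by omega)]

theorem eq_zero_of_sDCoeff_eq_zero {a : ℝ} (ha : a ≠ 0) {K m₀ : ℕ} {v : ℕ → E}
    (hv : ∀ m ≥ K, v m = 0) (h : ∀ m ≥ m₀, sDCoeff a v m = 0) : ∀ m ≥ m₀, v m = 0 := by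
  suffices ∀ j m, m₀ ≤ m → K ≤ m + j → v m = 0 from fun m hm => this K m hm (by omega)
  intro j
  induction j with
  | zero => exact fun m _ hm => hv m hm
  | succ j ih =>
    intro m hm hmj
    have h := h m hm
    rw [sDCoeff, ih (m + 1) (by omega) (by omega), smul_zero, add_zero] at h
    exact (smul_eq_zero.mp h).resolve_left ha

theorem exists_sDCoeff_eq {a : ℝ} (ha : a ≠ 0) {K : ℕ} {f : ℕ → E} (hf : ∀ m ≥ K, f m = 0) :
    ∃ u : ℕ → E, (∀ m ≥ K, u m = 0) ∧ sDCoeff a u = f := by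
  induction K generalizing f with
  | zero => exact ⟨0, fun _ _ => rfl, by funext m; simp [sDCoeff, hf m (Nat.zero_le m)]⟩
  | succ K ih =>
    -- `sDCoeff a top K = f K`, so `f - sDCoeff a top` vanishes from `K` on
    set top : ℕ → E := Pi.single K (a⁻¹ • f K)
    obtain ⟨u, hu, hsu⟩ := ih (f := f - sDCoeff a top) fun m hm => by
      rcases hm.eq_or_lt with rfl | hlt
      · simp [top, sDCoeff, smul_smul, ha]
      · simp [top, sDCoeff, hf m hlt, Pi.single_eq_of_ne hlt.ne',
          Pi.single_eq_of_ne (by omega : m + 1 ≠ K)]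
    refine ⟨u + top, fun m hm => ?_, by rw [sDCoeff_add, hsu, sub_add_cancel]⟩
    simp [top, hu m (by omega), Pi.single_eq_of_ne (by omega : m ≠ K)]

end Coefficients

section PowLogSum

variable {E : Type*}

noncomputable def powLogSum [AddCommMonoid E] [Module ℝ E] (a : ℝ) (K : ℕ) (v : ℕ → E) (t : ℝ) :
    E :=
  ∑ m ∈ range K, (t ^ a * Real.log t ^ m) • v m

theorem powLogSum_congr [AddCommMonoid E] [Module ℝ E] {a : ℝ} {K : ℕ} {v w : ℕ → E}
    (h : ∀ m < K, v m = w m) : powLogSum a K v = powLogSum a K w :=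
  funext fun _ => sum_congr rfl fun m hm => by rw [h m (mem_range.mp hm)]

theorem powLogSum_add [AddCommMonoid E] [Module ℝ E] (a : ℝ) (K : ℕ) (v w : ℕ → E) (t : ℝ) :
    powLogSum a K v t + powLogSum a K w t = powLogSum a K (v + w) t := by
  simp only [powLogSum, Pi.add_apply, smul_add, sum_add_distrib]

theorem powLogSum_single_zero [AddCommMonoid E] [Module ℝ E] (a : ℝ) {K : ℕ} (hK : 0 < K)
    (x : E) (t : ℝ) : powLogSum a K (Pi.single 0 x) t = t ^ a • x := by
  rw [powLogSum, sum_eq_single_of_mem 0 (mem_range.mpr hK) fun m _ hm => by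
    rw [Pi.single_eq_of_ne hm, smul_zero]]
  simp

theorem smul_deriv_powLogSum [NormedAddCommGroup E] [NormedSpace ℝ E] {a : ℝ} {K : ℕ}
    {v : ℕ → E} (hv : v K = 0) {s : ℝ} (hs : 0 < s) :
    s • deriv (powLogSum a K v) s = powLogSum a K (sDCoeff a v) s := by
  have hderiv : HasDerivAt (powLogSum a K v) (∑ m ∈ range K,
      (a * s ^ (a - 1) * Real.log s ^ m + s ^ a * (m * Real.log s ^ (m - 1) * s⁻¹)) • v m) s :=
    HasDerivAt.fun_sum fun m _ => ((Real.hasDerivAt_rpow_const (Or.inl hs.ne')).mul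
      ((Real.hasDerivAt_log hs.ne').pow m)).smul_const (v m)
  have hterm : ∀ m : ℕ,
      s • (a * s ^ (a - 1) * Real.log s ^ m + s ^ a * (m * Real.log s ^ (m - 1) * s⁻¹)) • v m
        = (s ^ a * Real.log s ^ m) • a • v m
          + ((m : ℝ) * (s ^ a * Real.log s ^ (m - 1))) • v m := by
    intro m
    rw [smul_smul, smul_smul, ← add_smul, Real.rpow_sub_one hs.ne']
    congr 1
    field_simp
  have hlower : ∑ m ∈ range K, ((m : ℝ) * (s ^ a * Real.log s ^ (m - 1))) • v m
      = ∑ m ∈ range K, (s ^ a * Real.log s ^ m) • ((m : ℝ) + 1) • v (m + 1) := by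
    set g : ℕ → E := fun m => ((m : ℝ) * (s ^ a * Real.log s ^ (m - 1))) • v m
    have hsucc := sum_range_succ g K
    rw [sum_range_succ', show g 0 = 0 by simp [g], show g K = 0 by simp [g, hv], add_zero,
      add_zero] at hsucc
    rw [← hsucc]
    refine sum_congr rfl fun m _ => ?_
    simp only [g, smul_smul, Nat.cast_succ, Nat.add_sub_cancel, mul_comm]
  rw [hderiv.deriv, smul_sum]
  simp only [hterm, sum_add_distrib, hlower, powLogSum, sDCoeff, smul_add]

theorem eq_zero_of_forall_sum_pow_mul_eq_zero {K : ℕ} {c : ℕ → ℝ}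
    (h : ∀ x : ℝ, ∑ m ∈ range K, x ^ m * c m = 0) : ∀ m < K, c m = 0 := by
  set p : Polynomial ℝ := ∑ j ∈ range K, Polynomial.C (c j) * Polynomial.X ^ j
  have hp : p = 0 := Polynomial.funext fun x => by
    simp only [p, Polynomial.eval_finsetSum, Polynomial.eval_mul, Polynomial.eval_C,
      Polynomial.eval_pow, Polynomial.eval_X, Polynomial.eval_zero]
    rw [← h x]
    exact sum_congr rfl fun _ _ => mul_comm _ _
  intro m hm
  simpa [p, Polynomial.finsetSum_coeff, Polynomial.coeff_C_mul_X_pow, hm] using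
    congrArg (Polynomial.coeff · m) hp

theorem eq_zero_of_powLogSum_eq_zero {ι : Type*} {a : ℝ} {K : ℕ} {w : ℕ → ι → ℝ}
    (h : ∀ s > 0, powLogSum a K w s = 0) : ∀ m < K, w m = 0 := by
  intro m hm
  funext i
  refine eq_zero_of_forall_sum_pow_mul_eq_zero (c := fun j => w j i) (fun x => ?_) m hm
  -- substitute `s = exp x` and divide by `exp x ^ a`
  have hx := congrFun (h (Real.exp x) (Real.exp_pos x)) i
  simp only [powLogSum, Real.log_exp, Finset.sum_apply, Pi.smul_apply, smul_eq_mul, mul_assoc,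
    ← mul_sum, Pi.zero_apply] at hx
  exact (mul_eq_zero.mp hx).resolve_left (Real.rpow_pos_of_pos (Real.exp_pos x) a).ne'

end PowLogSum

noncomputable def RicCoeff (n : ℕ) (v : ℕ → Fin 4 → ℝ) (m : ℕ) : Fin 4 → ℝ :=
  A2 n *ᵥ sDCoeff n (sDCoeff n v) m + A1 n *ᵥ sDCoeff n v m + A0 n *ᵥ v m

noncomputable def LDelCoeff (n : ℕ) (ω : ℕ → Fin 2 → ℝ) (m : ℕ) : Fin 4 → ℝ :=
  N1 *ᵥ sDCoeff n ω m + N0 *ᵥ ω m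

section Indicial

variable {n K : ℕ}

theorem sD_powLogSum {a : ℝ} {v : ℕ → Fin 4 → ℝ} (hv : ∀ m ≥ K, v m = 0) {s : ℝ} (hs : 0 < s) :
    sD (powLogSum a K v) s = powLogSum a K (sDCoeff a v) s :=
  smul_deriv_powLogSum (hv K le_rfl) hs

theorem LRic_powLogSum {v : ℕ → Fin 4 → ℝ} (hv : ∀ m ≥ K, v m = 0) {s : ℝ} (hs : 0 < s) :
    LRic n (powLogSum n K v) s = powLogSum n K (RicCoeff n v) s := by
  have hsD : sD (powLogSum n K v) =ᶠ[nhds s] powLogSum n K (sDCoeff n v) :=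
    eventually_of_mem (Ioi_mem_nhds hs) fun t ht => sD_powLogSum hv ht
  have hsDsD : sD (sD (powLogSum n K v)) s = powLogSum n K (sDCoeff n (sDCoeff n v)) s := by
    rw [sD, hsD.deriv_eq]
    exact sD_powLogSum (sDCoeff_eq_zero_of_ge hv) hs
  rw [LRic, hsDsD, sD_powLogSum hv hs]
  simp only [powLogSum, mulVec_sum, mulVec_smul, RicCoeff, smul_add, sum_add_distrib]

theorem LDel_powLogSum {ω : ℕ → Fin 2 → ℝ} (hω : ω K = 0) {s : ℝ} (hs : 0 < s) :
    LDel (powLogSum n K ω) s = powLogSum n K (LDelCoeff n ω) s := by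
  rw [LDel, smul_deriv_powLogSum hω hs]
  simp only [powLogSum, mulVec_sum, mulVec_smul, LDelCoeff, smul_add, sum_add_distrib]

theorem RicCoeff_eq_zero_of_ge {v : ℕ → Fin 4 → ℝ} (hv : ∀ m ≥ K, v m = 0) :
    ∀ m ≥ K, RicCoeff n v m = 0 := fun m hm => by
  simp [RicCoeff, hv m hm, sDCoeff_eq_zero_of_ge hv m hm,
    sDCoeff_eq_zero_of_ge (sDCoeff_eq_zero_of_ge hv) m hm]

theorem RicCoeff_zero_add_mul_two (v : ℕ → Fin 4 → ℝ) (m : ℕ) :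
    RicCoeff n v m 0 + n * RicCoeff n v m 2
      = ((n : ℝ) ^ 2 - n) * (v m 0 - sDCoeff n (fun j => v j 2) m) := by
  simp [RicCoeff, sDCoeff, A2, A1, A0, dotProduct, Fin.sum_univ_four]
  ring

theorem RicCoeff_three (v : ℕ → Fin 4 → ℝ) (m : ℕ) :
    RicCoeff n v m 3 = ((m : ℝ) + 1) / 2 * sDCoeff n (fun j => v j 3) (m + 1) := by
  simp [RicCoeff, sDCoeff, A2, A1, A0, dotProduct, Fin.sum_univ_four]
  ring

theorem apply_zero_eq_of_RicCoeff_eq_zero (hn : 2 ≤ n) {v : ℕ → Fin 4 → ℝ} {m : ℕ}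
    (h : RicCoeff n v m = 0) : v m 0 = sDCoeff n (fun j => v j 2) m := by
  have hrow := RicCoeff_zero_add_mul_two (n := n) v m
  simp only [h, Pi.zero_apply, mul_zero, add_zero] at hrow
  have hn' : ((n : ℝ) ^ 2 - n) ≠ 0 := by
    have : (2 : ℝ) ≤ n := by exact_mod_cast hn
    nlinarith
  exact sub_eq_zero.mp ((mul_eq_zero.mp hrow.symm).resolve_left hn')

theorem apply_three_eq_zero_of_RicCoeff_eq_zero (hn : n ≠ 0) {v : ℕ → Fin 4 → ℝ}
    (hv : ∀ m ≥ K, v m = 0) (h : ∀ m, RicCoeff n v m = 0) : ∀ m ≥ 1, v m 3 = 0 := by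
  refine eq_zero_of_sDCoeff_eq_zero (a := n) (by exact_mod_cast hn) (K := K)
    (fun m hm => by rw [hv m hm]; rfl) fun m hm => ?_
  obtain ⟨p, rfl⟩ := Nat.exists_eq_add_of_le' hm
  have hrow := RicCoeff_three (n := n) v p
  rw [h p, Pi.zero_apply, eq_comm] at hrow
  exact (mul_eq_zero.mp hrow).resolve_left (by positivity)

end Indicial

theorem exists_gauge_LDelCoeff {n K : ℕ} (hn : 2 ≤ n) {v : ℕ → Fin 4 → ℝ}
    (hv : ∀ m ≥ K, v m = 0) (h : ∀ m, RicCoeff n v m = 0) :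
    ∃ ω : ℕ → Fin 2 → ℝ, (∀ m ≥ K, ω m = 0) ∧
      v + LDelCoeff n ω = Pi.single 0 ![0, 0, 0, v 0 3] := by
  obtain ⟨u, hu, hsu⟩ := exists_sDCoeff_eq (a := n + 1) (K := K) (by positivity)
    (f := fun m => -2 * v m 1) fun m hm => by simp [hv m hm]
  refine ⟨fun m => ![-v m 2, u m], fun m hm => ?_, funext fun m => ?_⟩
  · simp [hv m hm, hu m hm]
  have h0 := apply_zero_eq_of_RicCoeff_eq_zero hn (h m)
  have h1 := congrFun hsu m
  have h3 := apply_three_eq_zero_of_RicCoeff_eq_zero (by omega) hv h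
  ext i
  fin_cases i <;> simp [LDelCoeff, sDCoeff, N1, N0, Pi.single_apply, ite_apply] at h0 h1 ⊢
  · linear_combination h0
  · linear_combination h1 / 2
  · split_ifs with hm0
    · rw [hm0]
    · exact h3 m (Nat.one_le_iff_ne_zero.mpr hm0)

/-- Solving away log terms at the exceptional weight `λ = n` by a pure gauge term:
if `h(s) = Σ_{m≤k} s^n (log s)^m h_m` satisfies `L_Ric h = 0` on `(0,∞)`, then there
are `ω_m` and `α ∈ ℝ` with `h + L_{δ*} ω = s^n (0,0,0,α)`, where
`ω(s) = Σ_{m≤k} s^n (log s)^m ω_m`. -/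
theorem solve_order_n_by_gauge (n : ℕ) (hn : 3 ≤ n) (k : ℕ) (hv : ℕ → Fin 4 → ℝ)
    (hEq : ∀ s : ℝ, 0 < s →
      LRic n (fun t => ∑ m ∈ Finset.range (k + 1),
        (t ^ (n : ℝ) * Real.log t ^ m) • hv m) s = 0) :
    ∃ ω : ℕ → Fin 2 → ℝ, ∃ α : ℝ, ∀ s : ℝ, 0 < s →
      (∑ m ∈ Finset.range (k + 1), (s ^ (n : ℝ) * Real.log s ^ m) • hv m)
        + LDel (fun t => ∑ m ∈ Finset.range (k + 1),
            (t ^ (n : ℝ) * Real.log t ^ m) • ω m) s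
        = s ^ (n : ℝ) • ![0, 0, 0, α] := by
  set v : ℕ → Fin 4 → ℝ := fun m => if m < k + 1 then hv m else 0
  have hvK : ∀ m ≥ k + 1, v m = 0 := fun m hm => if_neg (by omega)
  have hsum : powLogSum n (k + 1) hv = powLogSum n (k + 1) v :=
    powLogSum_congr fun m hm => (if_pos hm).symm
  have hRic : ∀ m, RicCoeff n v m = 0 := fun m => by
    rcases lt_or_ge m (k + 1) with hm | hm
    · refine eq_zero_of_powLogSum_eq_zero (a := n) (fun s hs => ?_) m hm
      rw [← LRic_powLogSum hvK hs, ← hsum]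
      exact hEq s hs
    · exact RicCoeff_eq_zero_of_ge hvK m hm
  obtain ⟨ω, hωK, hω⟩ := exists_gauge_LDelCoeff (by omega) hvK hRic
  refine ⟨ω, v 0 3, fun s hs => ?_⟩
  change powLogSum n (k + 1) hv s + LDel (powLogSum n (k + 1) ω) s = _
  rw [hsum, LDel_powLogSum (hωK _ le_rfl) hs, powLogSum_add, hω,
    powLogSum_single_zero _ k.succ_pos]
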